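/- For a degree sequence d = (d_1,...,d_n) with all d_i ≤ m and 2m ≤ n, the number of leaves #C(d) in the recursion tree of the recurrence C(d) = ∑_{S ⊆ {1,...,n-1}, |S| = d_n} C(d/S) satisfies #C(d) ≤ binomial(n,m)^{n-2m} · C_m for some constant C_m depending only on m. -/

import Mathlib

/-- `numLeaves l` is the number of leaves in the recursion tree of the recurrence
`C(d) = ∑_{S ⊆ {1,…,n-1}, |S| = dₙ} C((d₁,…,d_{n-1})/S)`, where the input list `l`
is the degree sequence in non-increasing order, and `d/S` subtracts `1` at the
indices in `S`, removes the zeros and re-sorts in non-increasing order. -/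
def numLeaves : List ℕ → ℕ
  | [] => 1
  | a :: t =>
    let front := (a :: t).dropLast
    ∑ S ∈ (Finset.univ : Finset (Fin front.length)).powersetCard
        ((a :: t).getLast (by simp)),
      numLeaves
        (((List.ofFn fun i => front.get i - if i ∈ S then 1 else 0).filter
            (· ≠ 0)).mergeSort (· ≥ ·))
  termination_by l => l.length
  decreasing_by
    simp only [List.length_mergeSort]
    calc ((List.ofFn fun i => front.get i - if i ∈ S then 1 else 0).filter (· ≠ 0)).length
        ≤ (List.ofFn fun i => front.get i - if i ∈ S then 1 else 0).length :=
          List.length_filter_le _ _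
      _ = front.length := by simp
      _ < (a :: t).length := by
          simp [front, List.length_dropLast]

/-! Every step of the recursion deletes the last entry `dₙ ≤ m` and branches into
`binomial(n - 1, dₙ) ≤ binomial(n, m)` children (monotonicity of `binomial(n, ·)` below `n / 2`),
whose entries are still at most `m`. After `n - 2m` levels the sequences have length at most
`2m`, and there the crude bound `2 ^ (k²)` for sequences of length `k` gives the constant. -/

open Finset

theorem Nat.choose_le_choose_of_le_of_two_mul_le {n d m : ℕ} (hdm : d ≤ m) (hm : 2 * m ≤ n) :
    n.choose d ≤ n.choose m := by
  induction m, hdm using Nat.le_induction with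
  | base => rfl
  | succ k _ ih => exact (ih (by omega)).trans (Nat.choose_le_succ_of_lt_half_left (by omega))

theorem Nat.choose_pow_sub_two_mul_monotone (m : ℕ) :
    Monotone fun n => n.choose m ^ (n - 2 * m) := by
  refine monotone_nat_of_le_succ fun n => ?_
  rcases le_or_gt (n + 1) (2 * m) with hn | hn
  · simp [Nat.sub_eq_zero_of_le hn, Nat.sub_eq_zero_of_le (n.le_succ.trans hn)]
  · calc n.choose m ^ (n - 2 * m) ≤ (n + 1).choose m ^ (n - 2 * m) :=
          Nat.pow_le_pow_left (Nat.choose_le_choose m n.le_succ) _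
      _ ≤ (n + 1).choose m ^ (n + 1 - 2 * m) :=
          Nat.pow_le_pow_right (Nat.choose_pos (by omega)) (by omega)

/-- `d / S` in the notation of the recurrence. -/
def childSeq (l : List ℕ) (S : Finset (Fin l.dropLast.length)) : List ℕ :=
  ((List.ofFn fun i => l.dropLast.get i - if i ∈ S then 1 else 0).filter (· ≠ 0)).mergeSort (· ≥ ·)

theorem numLeaves_nil : numLeaves [] = 1 := by
  rw [numLeaves]

theorem numLeaves_cons (a : ℕ) (t : List ℕ) :
    numLeaves (a :: t) = ∑ S ∈ (univ : Finset (Fin (a :: t).dropLast.length)).powersetCard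
      ((a :: t).getLast (List.cons_ne_nil a t)), numLeaves (childSeq (a :: t) S) := by
  rw [numLeaves]
  rfl

theorem length_childSeq_le (l : List ℕ) (S : Finset (Fin l.dropLast.length)) :
    (childSeq l S).length ≤ l.length - 1 := by
  rw [childSeq, List.length_mergeSort]
  exact (List.length_filter_le _ _).trans (by simp)

theorem le_of_mem_childSeq {l : List ℕ} {m : ℕ} (hm : ∀ x ∈ l, x ≤ m)
    (S : Finset (Fin l.dropLast.length)) : ∀ x ∈ childSeq l S, x ≤ m := by
  intro x hx
  simp only [childSeq, List.mem_mergeSort, List.mem_filter, List.mem_ofFn] at hx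
  obtain ⟨⟨i, rfl⟩, -⟩ := hx
  exact (Nat.sub_le _ _).trans (hm _ (List.dropLast_subset _ (List.get_mem _ _)))

theorem numLeaves_cons_le {a : ℕ} {t : List ℕ} {B : ℕ}
    (hB : ∀ S, numLeaves (childSeq (a :: t) S) ≤ B) :
    numLeaves (a :: t) ≤ t.length.choose ((a :: t).getLast (List.cons_ne_nil a t)) * B := by
  rw [numLeaves_cons]
  refine (sum_le_card_nsmul _ _ _ fun S _ => hB S).trans_eq ?_
  simp

theorem numLeaves_le_two_pow_sq : ∀ l : List ℕ, numLeaves l ≤ 2 ^ l.length ^ 2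
  | [] => by simp [numLeaves_nil]
  | a :: t => by
    have hchild (S) : numLeaves (childSeq (a :: t) S) ≤ 2 ^ t.length ^ 2 :=
      (numLeaves_le_two_pow_sq _).trans <| Nat.pow_le_pow_right two_pos <|
        Nat.pow_le_pow_left (by simpa using length_childSeq_le (a :: t) S) 2
    calc numLeaves (a :: t) ≤ 2 ^ t.length * 2 ^ t.length ^ 2 :=
          (numLeaves_cons_le hchild).trans (Nat.mul_le_mul_right _ (Nat.choose_le_two_pow _ _))
      _ ≤ 2 ^ (a :: t).length ^ 2 := by
          rw [← pow_add]
          exact Nat.pow_le_pow_right two_pos (by simp only [List.length_cons]; nlinarith)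
termination_by l => l.length
decreasing_by exact (length_childSeq_le _ S).trans_lt (by simp)

theorem numLeaves_le_choose_pow_mul {m : ℕ} :
    ∀ l : List ℕ, (∀ x ∈ l, x ≤ m) →
      numLeaves l ≤ l.length.choose m ^ (l.length - 2 * m) * 2 ^ (2 * m) ^ 2
  | [], _ => by simp [numLeaves_nil, Nat.one_le_two_pow]
  | a :: t, hm => by
    by_cases hshort : (a :: t).length ≤ 2 * m
    · rw [Nat.sub_eq_zero_of_le hshort, pow_zero, one_mul]
      exact (numLeaves_le_two_pow_sq _).trans
        (Nat.pow_le_pow_right two_pos (Nat.pow_le_pow_left hshort 2))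
    simp only [List.length_cons] at hshort ⊢
    have hchild (S) : numLeaves (childSeq (a :: t) S) ≤
        t.length.choose m ^ (t.length - 2 * m) * 2 ^ (2 * m) ^ 2 :=
      (numLeaves_le_choose_pow_mul _ (le_of_mem_childSeq hm S)).trans <| Nat.mul_le_mul_right _ <|
        Nat.choose_pow_sub_two_mul_monotone m (by simpa using length_childSeq_le (a :: t) S)
    have hlast : t.length.choose ((a :: t).getLast (List.cons_ne_nil a t)) ≤ t.length.choose m :=
      Nat.choose_le_choose_of_le_of_two_mul_le (hm _ (List.getLast_mem _)) (by omega)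
    calc numLeaves (a :: t)
        ≤ t.length.choose m * (t.length.choose m ^ (t.length - 2 * m) * 2 ^ (2 * m) ^ 2) :=
          (numLeaves_cons_le hchild).trans (Nat.mul_le_mul_right _ hlast)
      _ = t.length.choose m ^ (t.length + 1 - 2 * m) * 2 ^ (2 * m) ^ 2 := by
          rw [← mul_assoc, ← pow_succ', show t.length - 2 * m + 1 = t.length + 1 - 2 * m by omega]
      _ ≤ (t.length + 1).choose m ^ (t.length + 1 - 2 * m) * 2 ^ (2 * m) ^ 2 :=
          Nat.mul_le_mul_right _ (Nat.pow_le_pow_left (Nat.choose_le_choose m t.length.le_succ) _)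
termination_by l => l.length
decreasing_by exact (length_childSeq_le _ S).trans_lt (by simp)

theorem stmt_18 (m : ℕ) :
    ∃ C : ℕ, ∀ (n : ℕ) (l : List ℕ), l.length = n →
      l.Pairwise (· ≥ ·) → (∀ x ∈ l, x ≤ m) → 2 * m ≤ n →
        numLeaves l ≤ (Nat.choose n m) ^ (n - 2 * m) * C := by
  refine ⟨2 ^ (2 * m) ^ 2, ?_⟩
  rintro n l rfl - hm -
  exact numLeaves_le_choose_pow_mul l hm
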